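/- arXiv:1209.5224 — 2 statements merged into one kernel-verified Lean document; each statement's English description precedes it below -/
import Mathlib

section
/- Let φ : D → M D' be Scott continuous. A monotonic predicate m' : D' → L is a postcondition for an antitone function m : D → L (i.e., m'(b) ≥ m(a) * φ(a)(b) for all a ∈ D, b ∈ D') if and only if m' is a postcondition for m^u. -/
open Classical

variable {D D' L : Type*}

/-- `a` is way below `b`. -/
def WayBelow [Preorder D] (a b : D) : Prop :=
  ∀ S : Set D, S.Nonempty → DirectedOn (· ≤ ·) S → ∀ s : D, IsLUB S s → b ≤ s → ∃ c ∈ S, a ≤ c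

/-- Directed-complete poset. -/
def IsDCPO (D : Type*) [Preorder D] : Prop :=
  ∀ S : Set D, S.Nonempty → DirectedOn (· ≤ ·) S → ∃ s : D, IsLUB S s

/-- A domain: a continuous directed-complete poset. -/
def IsFuzzyDomain (D : Type*) [Preorder D] : Prop :=
  IsDCPO D ∧ ∀ b : D, DirectedOn (· ≤ ·) {a | WayBelow a b} ∧ IsLUB {a | WayBelow a b} b

/-- An `L`-fuzzy monotonic predicate on `D`: an antitone map sending directed
suprema in `D` to infima in `L` (i.e. a Scott-continuous map `D → Lᵒᵖ`). -/
def IsMonPred [Preorder D] [CompleteLattice L] (m : D → L) : Prop :=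
  Antitone m ∧ ∀ S : Set D, S.Nonempty → DirectedOn (· ≤ ·) S →
    ∀ s : D, IsLUB S s → m s = ⨅ c ∈ S, m c

/-- `η d₀` sends `d` to `1` if `d ≤ d₀` and to `0` otherwise. -/
noncomputable def eta [Preorder D] (L : Type*) [CompleteLattice L] (d₀ : D) : D → L :=
  fun d => if d ≤ d₀ then ⊤ else ⊥

/-- `f^u b = ⨅ { f a ∣ a ≪ b }`, the monotonic-predicate hull. -/
noncomputable def uHull [Preorder D] [CompleteLattice L] (f : D → L) : D → L :=
  fun b => ⨅ a ∈ {a | WayBelow a b}, f a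

/-- `α ⊙̄ m = (α * m)^u`. -/
noncomputable def smulMP [Preorder D] [CompleteLattice L] (mul : L → L → L)
    (α : L) (m : D → L) : D → L :=
  uHull (fun d => mul α (m d))

/-- Strongest postcondition transformer:
`sp(φ)(m)(b) = ⨅_{b' ≪ b} ⨆_{a} m a * φ a b'`. -/
noncomputable def sp [Preorder D] [Preorder D'] [CompleteLattice L]
    (mul : L → L → L) (φ : D → D' → L) (m : D → L) : D' → L :=
  fun b => ⨅ b' ∈ {b' | WayBelow b' b}, ⨆ a : D, mul (m a) (φ a b')

/-- Scott continuity of `φ : D → M D'`: `φ` sends a directed supremum in `D`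
to the supremum of the image in the poset of monotonic predicates on `D'`. -/
def ScottContTo [Preorder D] [Preorder D'] [CompleteLattice L] (φ : D → D' → L) : Prop :=
  ∀ S : Set D, S.Nonempty → DirectedOn (· ≤ ·) S → ∀ s : D, IsLUB S s →
    (∀ d ∈ S, φ d ≤ φ s) ∧ ∀ m : D' → L, IsMonPred m → (∀ d ∈ S, φ d ≤ m) → φ s ≤ m

lemma wb_nonempty [Preorder D] (hD : IsFuzzyDomain D) (a : D) :
    {c : D | WayBelow c a}.Nonempty := by
  by_contra h
  have he : {c : D | WayBelow c a} = ∅ := Set.not_nonempty_iff_eq_empty.mp h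
  have hlub := (hD.2 a).2
  rw [he] at hlub
  have hle : ∀ x : D, a ≤ x := fun x => hlub.2 (fun y hy => hy.elim)
  have haa : WayBelow a a := by
    intro S hS hdir s hlubS hs
    obtain ⟨c, hc⟩ := hS
    exact ⟨c, hc, hle c⟩
  exact h ⟨a, haa⟩

lemma wb_le [Preorder D] (hD : IsFuzzyDomain D) {c a : D} (h : WayBelow c a) : c ≤ a := by
  obtain ⟨hdir, hlub⟩ := hD.2 a
  obtain ⟨c', hc', hle⟩ := h _ (wb_nonempty hD a) hdir a hlub le_rfl
  exact hle.trans (hlub.1 hc')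

lemma mul_mono_right [CompleteLattice L] (mul : L → L → L)
    (hsup₁ : ∀ (a : L) (S : Set L), mul a (sSup S) = ⨆ b ∈ S, mul a b)
    {a x y : L} (h : x ≤ y) : mul a x ≤ mul a y := by
  have hy : sSup {x, y} = y := by
    rw [sSup_pair]; exact sup_eq_right.mpr h
  calc mul a x ≤ ⨆ b ∈ ({x, y} : Set L), mul a b := by
        exact le_biSup (fun b => mul a b) (Set.mem_insert _ _)
    _ = mul a (sSup {x, y}) := (hsup₁ a _).symm
    _ = mul a y := by rw [hy]

lemma mul_mono_left [CompleteLattice L] (mul : L → L → L)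
    (hsup₂ : ∀ (a : L) (S : Set L), mul (sSup S) a = ⨆ b ∈ S, mul b a)
    {a x y : L} (h : x ≤ y) : mul x a ≤ mul y a := by
  have hy : sSup {x, y} = y := by
    rw [sSup_pair]; exact sup_eq_right.mpr h
  calc mul x a ≤ ⨆ b ∈ ({x, y} : Set L), mul b a := by
        exact le_biSup (fun b => mul b a) (Set.mem_insert _ _)
    _ = mul (sSup {x, y}) a := (hsup₂ a _).symm
    _ = mul y a := by rw [hy]

theorem stmt_14 [PartialOrder D] [PartialOrder D'] [CompletelyDistribLattice L]
    (hD : IsFuzzyDomain D) (hD' : IsFuzzyDomain D') (mul : L → L → L)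
    (hassoc : ∀ a b c : L, mul (mul a b) c = mul a (mul b c))
    (hone : ∀ a : L, mul ⊤ a = a ∧ mul a ⊤ = a)
    (hsup₁ : ∀ (a : L) (S : Set L), mul a (sSup S) = ⨆ b ∈ S, mul a b)
    (hsup₂ : ∀ (a : L) (S : Set L), mul (sSup S) a = ⨆ b ∈ S, mul b a)
    (φ : D → D' → L) (hφ : ∀ a : D, IsMonPred (φ a)) (hsc : ScottContTo φ)
    (m : D → L) (hm : Antitone m) (m' : D' → L) (hm' : IsMonPred m') :
    (∀ (a : D) (b : D'), mul (m a) (φ a b) ≤ m' b) ↔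
      (∀ (a : D) (b : D'), mul (uHull m a) (φ a b) ≤ m' b) := by
  constructor
  · intro hpost a b
    set α := uHull m a with hα
    -- the residual predicate
    set n : D' → L := fun b => sSup {x | mul α x ≤ m' b} with hn
    have hmuln : ∀ b : D', mul α (n b) ≤ m' b := by
      intro b
      rw [hn]
      rw [hsup₁]
      exact iSup₂_le fun x hx => hx
    have hnanti : Antitone n := by
      intro b₁ b₂ hb
      apply sSup_le_sSup
      intro x hx
      exact hx.trans (hm'.1 hb)
    have hnpred : IsMonPred n := by
      refine ⟨hnanti, ?_⟩
      intro S hS hdir s hlub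
      apply le_antisymm
      · exact le_iInf₂ fun c hc => hnanti (hlub.1 hc)
      · apply le_sSup
        show mul α (⨅ c ∈ S, n c) ≤ m' s
        rw [hm'.2 S hS hdir s hlub]
        refine le_iInf₂ fun c hc => ?_
        exact (mul_mono_right mul hsup₁ (iInf₂_le c hc)).trans (hmuln c)
    have hαle : ∀ c, WayBelow c a → α ≤ m c := by
      intro c hc
      simp only [hα, uHull]
      exact iInf_le_of_le c (iInf_le _ hc)
    have hφn : ∀ c ∈ {c : D | WayBelow c a}, φ c ≤ n := by
      intro c hc b
      apply le_sSup
      show mul α (φ c b) ≤ m' b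
      exact (mul_mono_left mul hsup₂ (hαle c hc)).trans (hpost c b)
    obtain ⟨hdir, hlub⟩ := hD.2 a
    have hφa : φ a ≤ n :=
      (hsc _ (wb_nonempty hD a) hdir a hlub).2 n hnpred hφn
    exact (mul_mono_right mul hsup₁ (hφa b)).trans (hmuln b)
  · intro hpost a b
    have h1 : m a ≤ uHull m a := by
      simp only [uHull]
      exact le_iInf₂ fun c hc => hm (wb_le hD hc)
    exact (mul_mono_left mul hsup₂ h1).trans (hpost a b)
end

section
/- For an isotone map φ : D → M D', the strongest postcondition transformer sp(φ) : M D → M D' preserves arbitrary suprema if and only if φ is Scott continuous (preserves directed suprema). -/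
open Classical

variable {D D' L : Type*}

section AuxLemmas

variable {α : Type*}

lemma wb_trans_le [Preorder α] {a b c : α} (h : WayBelow a b) (hbc : b ≤ c) : WayBelow a c :=
  fun S hS hdir s hlub hcs => h S hS hdir s hlub (hbc.trans hcs)

lemma le_wb [Preorder α] {a b c : α} (hab : a ≤ b) (h : WayBelow b c) : WayBelow a c :=
  fun S hS hdir s hlub hcs => by
    obtain ⟨x, hx, hbx⟩ := h S hS hdir s hlub hcs
    exact ⟨x, hx, hab.trans hbx⟩

lemma wb_le_s16 [Preorder α] {a b : α} (h : WayBelow a b) : a ≤ b := by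
  have hdir : DirectedOn (· ≤ ·) ({b} : Set α) := by
    intro x hx y hy
    rw [Set.mem_singleton_iff] at hx hy
    exact ⟨b, rfl, hx.le, hy.le⟩
  obtain ⟨c, hc, hac⟩ := h {b} ⟨b, rfl⟩ hdir b isLUB_singleton le_rfl
  rw [Set.mem_singleton_iff] at hc
  exact hc ▸ hac

lemma wb_nonempty_s16 [Preorder α] (hA : IsFuzzyDomain α) (b : α) :
    {a | WayBelow a b}.Nonempty := by
  by_contra h
  rw [Set.not_nonempty_iff_eq_empty] at h
  have hlub := (hA.2 b).2
  rw [h] at hlub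
  have hbot : ∀ x : α, b ≤ x := fun x => hlub.2 (fun y hy => absurd hy (Set.notMem_empty y))
  have hwb : WayBelow b b := by
    intro S hS _ s _ _
    obtain ⟨x, hx⟩ := hS
    exact ⟨x, hx, hbot x⟩
  have : b ∈ ({a | WayBelow a b} : Set α) := hwb
  rw [h] at this
  exact this

lemma wb_union [Preorder α] (hA : IsFuzzyDomain α) {S : Set α} (hne : S.Nonempty)
    (hdir : DirectedOn (· ≤ ·) S) {s : α} (hlub : IsLUB S s) :
    ({c | ∃ d ∈ S, WayBelow c d}).Nonempty ∧
      DirectedOn (· ≤ ·) {c | ∃ d ∈ S, WayBelow c d} ∧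
      IsLUB {c | ∃ d ∈ S, WayBelow c d} s := by
  obtain ⟨d₀, hd₀⟩ := hne
  obtain ⟨c₀, hc₀⟩ := wb_nonempty_s16 hA d₀
  refine ⟨⟨c₀, d₀, hd₀, hc₀⟩, ?_, ?_, ?_⟩
  · rintro x ⟨d₁, hd₁, hx⟩ y ⟨d₂, hd₂, hy⟩
    obtain ⟨d, hd, h1, h2⟩ := hdir d₁ hd₁ d₂ hd₂
    obtain ⟨z, hz, hxz, hyz⟩ := (hA.2 d).1 x (wb_trans_le hx h1) y (wb_trans_le hy h2)
    exact ⟨z, ⟨d, hd, hz⟩, hxz, hyz⟩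
  · rintro x ⟨d, hd, hx⟩
    exact (wb_le_s16 hx).trans (hlub.1 hd)
  · intro u hu
    refine hlub.2 fun d hd => ?_
    exact (hA.2 d).2.2 fun c hc => hu ⟨d, hd, hc⟩

lemma wb_interp [Preorder α] (hA : IsFuzzyDomain α) {a b : α} (h : WayBelow a b) :
    ∃ c, WayBelow a c ∧ WayBelow c b := by
  obtain ⟨hne, hdir, hlub⟩ := wb_union hA (wb_nonempty_s16 hA b) (hA.2 b).1 (hA.2 b).2
  obtain ⟨c, ⟨d, hd, hcd⟩, hac⟩ := h _ hne hdir b hlub le_rfl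
  exact ⟨d, le_wb hac hcd, hd⟩


lemma biInf_wb_le {L : Type*} [CompleteLattice L] [Preorder α] {f : α → L} {b a : α}
    (h : WayBelow a b) : (⨅ x ∈ {x | WayBelow x b}, f x) ≤ f a :=
  iInf_le_of_le a (iInf_le _ h)

lemma le_biInf_wb {L : Type*} [CompleteLattice L] [Preorder α] {f : α → L} {b : α} {x : L}
    (h : ∀ a, WayBelow a b → x ≤ f a) : x ≤ ⨅ a ∈ {a | WayBelow a b}, f a :=
  le_iInf fun a => le_iInf fun ha => h a ha

variable {L : Type*} [CompleteLattice L]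

lemma monPred_apply [Preorder α] (hA : IsFuzzyDomain α) {m : α → L} (hm : IsMonPred m)
    (b : α) : m b = ⨅ a ∈ {a | WayBelow a b}, m a :=
  hm.2 _ (wb_nonempty_s16 hA b) (hA.2 b).1 b (hA.2 b).2

lemma monPred_le_uHull [Preorder α] (hA : IsFuzzyDomain α) {m g : α → L}
    (hm : IsMonPred m) (h : ∀ d, m d ≤ g d) : m ≤ uHull g := by
  intro b
  rw [monPred_apply hA hm b]
  exact iInf₂_mono fun a _ => h a

lemma uHull_le_monPred [Preorder α] (hA : IsFuzzyDomain α) {m g : α → L}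
    (hm : IsMonPred m) (h : ∀ d, g d ≤ m d) : uHull g ≤ m := by
  intro b
  rw [monPred_apply hA hm b]
  exact iInf₂_mono fun a _ => h a

lemma uHull_isMonPred [Preorder α] (hA : IsFuzzyDomain α) (g : α → L) :
    IsMonPred (uHull g) := by
  constructor
  · intro b₁ b₂ h
    exact le_biInf_wb fun a ha => biInf_wb_le (wb_trans_le ha h)
  · intro S hne hdir s hlub
    obtain ⟨hTne, hTdir, hTlub⟩ := wb_union hA hne hdir hlub
    apply le_antisymm
    · exact le_iInf₂ fun d hd => le_biInf_wb fun a ha => biInf_wb_le (wb_trans_le ha (hlub.1 hd))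
    · refine le_biInf_wb fun a ha => ?_
      obtain ⟨c, ⟨d, hd, hcd⟩, hac⟩ := ha _ hTne hTdir s hTlub le_rfl
      exact (biInf_le (fun c => uHull g c) hd).trans (biInf_wb_le (le_wb hac hcd))

lemma eta_isMonPred [Preorder α] (L : Type*) [CompleteLattice L] (d₀ : α) :
    IsMonPred (eta L d₀) := by
  constructor
  · intro d₁ d₂ h
    by_cases h1 : d₁ ≤ d₀
    · simp [eta, h1]
    · have h2 : ¬ d₂ ≤ d₀ := fun hh => h1 (h.trans hh)
      simp [eta, h1, h2]
  · intro S hne hdir s hlub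
    simp only [eta]
    by_cases hs : s ≤ d₀
    · rw [if_pos hs]
      refine le_antisymm (le_iInf₂ fun c hc => ?_) le_top
      exact le_of_eq (if_pos ((hlub.1 hc).trans hs)).symm
    · rw [if_neg hs]
      refine le_antisymm bot_le ?_
      have hex : ∃ c ∈ S, ¬ c ≤ d₀ := by
        by_contra hcon
        push_neg at hcon
        exact hs (hlub.2 hcon)
      obtain ⟨c, hc, hcd⟩ := hex
      exact (iInf₂_le c hc).trans (le_of_eq (if_neg hcd))

end AuxLemmas

theorem stmt_16 [PartialOrder D] [PartialOrder D'] [CompletelyDistribLattice L]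
    (hD : IsFuzzyDomain D) (hD' : IsFuzzyDomain D') (mul : L → L → L)
    (hassoc : ∀ a b c : L, mul (mul a b) c = mul a (mul b c))
    (hone : ∀ a : L, mul ⊤ a = a ∧ mul a ⊤ = a)
    (hsup₁ : ∀ (a : L) (S : Set L), mul a (sSup S) = ⨆ b ∈ S, mul a b)
    (hsup₂ : ∀ (a : L) (S : Set L), mul (sSup S) a = ⨆ b ∈ S, mul b a)
    (φ : D → D' → L) (hφ : ∀ a : D, IsMonPred (φ a)) (hφmono : Monotone φ) :
    (∀ F : Set (D → L), (∀ m ∈ F, IsMonPred m) →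
        sp mul φ (uHull (fun d => ⨆ m ∈ F, m d)) =
          uHull (fun b => ⨆ m ∈ F, sp mul φ m b)) ↔
      ScottContTo φ := by
  -- basic facts about `mul`
  have mul_bot : ∀ x : L, mul ⊥ x = ⊥ := by
    intro x
    have h := hsup₂ x (∅ : Set L)
    simpa using h
  have mul_le_l : ∀ {a₁ a₂ : L} (b : L), a₁ ≤ a₂ → mul a₁ b ≤ mul a₂ b := by
    intro a₁ a₂ b h
    have h2 : sSup {a₁, a₂} = a₂ := by rw [sSup_pair, sup_eq_right.mpr h]
    have h3 := hsup₂ b ({a₁, a₂} : Set L)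
    rw [h2] at h3
    rw [h3]
    exact le_iSup₂ (f := fun (c : L) (_ : c ∈ ({a₁, a₂} : Set L)) => mul c b) a₁
      (Set.mem_insert _ _)
  have mul_le_r : ∀ {b₁ b₂ : L} (a : L), b₁ ≤ b₂ → mul a b₁ ≤ mul a b₂ := by
    intro b₁ b₂ a h
    have h2 : sSup {b₁, b₂} = b₂ := by rw [sSup_pair, sup_eq_right.mpr h]
    have h3 := hsup₁ a ({b₁, b₂} : Set L)
    rw [h2] at h3
    rw [h3]
    exact le_iSup₂ (f := fun (c : L) (_ : c ∈ ({b₁, b₂} : Set L)) => mul a c) b₁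
      (Set.mem_insert _ _)
  have mul_biSup : ∀ (a : L) {ι : Type _} (s : Set ι) (f : ι → L),
      mul a (⨆ i ∈ s, f i) = ⨆ i ∈ s, mul a (f i) := by
    intro a ι s f
    have h1 : (⨆ i ∈ s, f i) = sSup (f '' s) := sSup_image.symm
    rw [h1, hsup₁, iSup_image]
  have mul_biSup' : ∀ (a : L) {ι : Type _} (s : Set ι) (f : ι → L),
      mul (⨆ i ∈ s, f i) a = ⨆ i ∈ s, mul (f i) a := by
    intro a ι s f
    have h1 : (⨆ i ∈ s, f i) = sSup (f '' s) := sSup_image.symm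
    rw [h1, hsup₂, iSup_image]
  -- sp on point predicates
  have sp_eta : ∀ d₀ : D, sp mul φ (eta L d₀) = φ d₀ := by
    intro d₀
    funext b
    have hkey : ∀ b' : D', (⨆ a : D, mul (eta L d₀ a) (φ a b')) = φ d₀ b' := by
      intro b'
      apply le_antisymm
      · refine iSup_le fun a => ?_
        by_cases h : a ≤ d₀
        · simp only [eta]
          rw [if_pos h, (hone _).1]
          exact hφmono h b'
        · simp only [eta]
          rw [if_neg h, mul_bot]
          exact bot_le
      · have h1 : mul (eta L d₀ d₀) (φ d₀ b') = φ d₀ b' := by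
          simp only [eta]
          rw [if_pos (le_refl d₀), (hone _).1]
        exact h1 ▸ le_iSup (fun a => mul (eta L d₀ a) (φ a b')) d₀
    simp only [sp]
    calc (⨅ b' ∈ {b' | WayBelow b' b}, ⨆ a : D, mul (eta L d₀ a) (φ a b'))
        = ⨅ b' ∈ {b' | WayBelow b' b}, φ d₀ b' :=
          iInf_congr fun b' => iInf_congr fun _ => hkey b'
      _ = φ d₀ b := (monPred_apply hD' (hφ d₀) b).symm
  constructor
  · -- sp preserves sups → Scott continuity
    intro H S hne hdir s hlub
    refine ⟨fun d hd => hφmono (hlub.1 hd), ?_⟩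
    intro m hm hub
    set F : Set (D → L) := (fun d => eta L d) '' S with hF
    have hFmp : ∀ m' ∈ F, IsMonPred m' := by
      rintro m' ⟨d, hd, rfl⟩
      exact eta_isMonPred L d
    have e1 : (fun d' => ⨆ m' ∈ F, m' d') = fun d' => ⨆ d ∈ S, eta L d d' := by
      funext d'
      rw [hF]
      exact iSup_image
    have e2 : uHull (fun d' => ⨆ d ∈ S, eta L d d') = eta L s := by
      funext b
      by_cases hb : b ≤ s
      · have hT : eta L s b = ⊤ := if_pos hb
        rw [hT]
        refine le_antisymm le_top (le_biInf_wb fun a ha => ?_)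
        obtain ⟨d, hd, had⟩ := (wb_trans_le ha hb) S hne hdir s hlub le_rfl
        have h1 : (⊤ : L) = eta L d a := (if_pos had).symm
        exact h1.le.trans (le_biSup (fun d => eta L d a) hd)
      · have hB : eta L s b = ⊥ := if_neg hb
        rw [hB]
        have hex : ∃ a, WayBelow a b ∧ ∀ d ∈ S, ¬ a ≤ d := by
          by_contra hcon
          push_neg at hcon
          refine hb ((hD.2 b).2.2 fun a ha => ?_)
          obtain ⟨d, hd, had⟩ := hcon a ha
          exact had.trans (hlub.1 hd)
        obtain ⟨a, ha, hna⟩ := hex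
        refine le_antisymm ((biInf_wb_le ha).trans (iSup₂_le fun d hd => ?_)) bot_le
        exact le_of_eq (if_neg (hna d hd))
    have estep := H F hFmp
    rw [e1, e2, sp_eta] at estep
    have e3 : (fun b => ⨆ m' ∈ F, sp mul φ m' b) = fun b => ⨆ d ∈ S, φ d b := by
      funext b
      rw [hF, iSup_image]
      exact iSup_congr fun d => iSup_congr fun _ => by rw [sp_eta]
    rw [e3] at estep
    rw [estep]
    exact uHull_le_monPred hD' hm fun b => iSup₂_le fun d hd => hub d hd b
  · -- Scott continuity → sp preserves sups
    intro hsc F hF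
    set g : D → L := fun d => ⨆ m ∈ F, m d with hg
    set M : D → L := uHull g with hM
    have hMle : ∀ m ∈ F, ∀ d, m d ≤ M d := fun m hm =>
      monPred_le_uHull hD (hF m hm) (fun d => le_biSup (fun m' => m' d) hm)
    set σ : (D → L) → D' → L := fun m b' => ⨆ a : D, mul (m a) (φ a b') with hσ
    have sp_def : ∀ (m : D → L) (b : D'),
        sp mul φ m b = ⨅ b' ∈ {b' | WayBelow b' b}, σ m b' := fun _ _ => rfl
    have σ_anti : ∀ (m : D → L) {b₁ b₂ : D'}, b₁ ≤ b₂ → σ m b₂ ≤ σ m b₁ :=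
      fun m _ _ h => iSup_mono fun a => mul_le_r _ ((hφ a).1 h)
    have σ_le_sp : ∀ (m : D → L) (a : D'), σ m a ≤ sp mul φ m a := by
      intro m a
      rw [sp_def]
      exact le_biInf_wb fun a' ha' => σ_anti m (wb_le_s16 ha')
    have sp_le_σ : ∀ (m : D → L) {b' b : D'}, WayBelow b' b → sp mul φ m b ≤ σ m b' := by
      intro m b' b h
      rw [sp_def]
      exact biInf_wb_le h
    have hφwb : ∀ (d : D) {a b₁ : D'}, WayBelow a b₁ →
        φ d b₁ ≤ ⨆ c ∈ {c | WayBelow c d}, φ c a := by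
      intro d a b₁ hab
      have hmp := uHull_isMonPred hD' (fun b => ⨆ c ∈ {c | WayBelow c d}, φ c b)
      have hub : ∀ c ∈ {c | WayBelow c d},
          φ c ≤ uHull (fun b => ⨆ c' ∈ {c' | WayBelow c' d}, φ c' b) := fun c hc =>
        monPred_le_uHull hD' (hφ c) (fun b => le_biSup (fun c' => φ c' b) hc)
      have h1 := (hsc _ (wb_nonempty_s16 hD d) (hD.2 d).1 d (hD.2 d).2).2 _ hmp hub
      exact (h1 b₁).trans (biInf_wb_le hab)
    funext b
    apply le_antisymm
    · -- hard direction
      refine le_biInf_wb fun a ha => ?_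
      obtain ⟨b₁, hab₁, hb₁b⟩ := wb_interp hD' ha
      refine (sp_le_σ M hb₁b).trans (iSup_le fun d => ?_)
      calc mul (M d) (φ d b₁)
          ≤ mul (M d) (⨆ c ∈ {c | WayBelow c d}, φ c a) := mul_le_r _ (hφwb d hab₁)
        _ = ⨆ c ∈ {c | WayBelow c d}, mul (M d) (φ c a) := mul_biSup _ _ _
        _ ≤ ⨆ c ∈ {c | WayBelow c d}, mul (g c) (φ c a) :=
            iSup₂_mono fun c hc => mul_le_l _ (biInf_wb_le hc)
        _ = ⨆ c ∈ {c | WayBelow c d}, ⨆ m ∈ F, mul (m c) (φ c a) :=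
            iSup_congr fun c => iSup_congr fun _ => mul_biSup' (φ c a) F (fun m => m c)
        _ ≤ ⨆ m ∈ F, sp mul φ m a := by
            refine iSup₂_le fun c _ => iSup₂_le fun m hm => ?_
            refine le_trans ?_ (le_biSup _ hm)
            exact (le_iSup (fun d' => mul (m d') (φ d' a)) c).trans (σ_le_sp m a)
    · -- easy direction
      rw [sp_def]
      refine le_biInf_wb fun b' hb' => ?_
      obtain ⟨a, hb'a, hab⟩ := wb_interp hD' hb'
      calc uHull (fun x => ⨆ m ∈ F, sp mul φ m x) b
          ≤ ⨆ m ∈ F, sp mul φ m a := biInf_wb_le hab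
        _ ≤ σ M b' := iSup₂_le fun m hm =>
            (sp_le_σ m hb'a).trans (iSup_mono fun d => mul_le_l _ (hMle m hm d))
end
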